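/- Let k ≠ 0 be a real constant and let u, w : ℝ² → ℝ be twice continuously differentiable functions of (x₁, x₂) satisfying the Bäcklund relations ∂u/∂x₂ = k⁻¹ sin(u − w) and ∂u/∂x₁ = ∂w/∂x₁ + k sin u at every point, and suppose cos(u(x) − w(x)) ≥ 0 for every point x. Then 1 − k² (∂u/∂x₂)² = cos²(u − w) ≥ 0 at every point and u satisfies the nonlinear wave equation ∂²u/∂x₁∂x₂ = √(1 − k² (∂u/∂x₂)²) · sin u at every point. -/

import Mathlib

/-- Partial derivative with respect to the first variable. -/
noncomputable def pd1 (u : ℝ × ℝ → ℝ) (p : ℝ × ℝ) : ℝ := deriv (fun x₁ => u (x₁, p.2)) p.1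

/-- Partial derivative with respect to the second variable. -/
noncomputable def pd2 (u : ℝ × ℝ → ℝ) (p : ℝ × ℝ) : ℝ := deriv (fun x₂ => u (p.1, x₂)) p.2

/-!
Squaring the first Bäcklund relation gives `1 − k² u_{x₂}² = cos²(u − w)`. Differentiating it
in `x₁` and substituting the second relation gives `u_{x₂x₁} = cos(u − w) sin u`; by symmetry of
the mixed partials of the `C²` function `u`, and since `cos(u − w) ≥ 0` is the square root of
`1 − k² u_{x₂}²`, this is the wave equation.
-/

open Real

section Slices

variable {F : Type*} [NormedAddCommGroup F] [NormedSpace ℝ F]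
  {f : ℝ × ℝ → F} {f' : ℝ × ℝ →L[ℝ] F} {p : ℝ × ℝ}

theorem HasFDerivAt.hasDerivAt_slice_fst (hf : HasFDerivAt f f' p) :
    HasDerivAt (fun x₁ => f (x₁, p.2)) (f' (1, 0)) p.1 :=
  hf.comp_hasDerivAt p.1 ((hasDerivAt_id p.1).prodMk (hasDerivAt_const _ _))

theorem HasFDerivAt.hasDerivAt_slice_snd (hf : HasFDerivAt f f' p) :
    HasDerivAt (fun x₂ => f (p.1, x₂)) (f' (0, 1)) p.2 :=
  hf.comp_hasDerivAt p.2 ((hasDerivAt_const _ _).prodMk (hasDerivAt_id p.2))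

end Slices

section PartialDerivatives

variable {u : ℝ × ℝ → ℝ} {p : ℝ × ℝ}

theorem pd1_eq_fderiv (hu : DifferentiableAt ℝ u p) : pd1 u p = fderiv ℝ u p (1, 0) :=
  hu.hasFDerivAt.hasDerivAt_slice_fst.deriv

theorem pd2_eq_fderiv (hu : DifferentiableAt ℝ u p) : pd2 u p = fderiv ℝ u p (0, 1) :=
  hu.hasFDerivAt.hasDerivAt_slice_snd.deriv

theorem DifferentiableAt.hasDerivAt_pd1 (hu : DifferentiableAt ℝ u p) :
    HasDerivAt (fun x₁ => u (x₁, p.2)) (pd1 u p) p.1 :=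
  pd1_eq_fderiv hu ▸ hu.hasFDerivAt.hasDerivAt_slice_fst

theorem pd1_fderiv_apply (hu : DifferentiableAt ℝ (fderiv ℝ u) p) (v : ℝ × ℝ) :
    pd1 (fun q => fderiv ℝ u q v) p = fderiv ℝ (fderiv ℝ u) p (1, 0) v :=
  ((ContinuousLinearMap.apply ℝ ℝ v).hasFDerivAt.comp_hasDerivAt p.1
    hu.hasFDerivAt.hasDerivAt_slice_fst).deriv

theorem pd2_fderiv_apply (hu : DifferentiableAt ℝ (fderiv ℝ u) p) (v : ℝ × ℝ) :
    pd2 (fun q => fderiv ℝ u q v) p = fderiv ℝ (fderiv ℝ u) p (0, 1) v :=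
  ((ContinuousLinearMap.apply ℝ ℝ v).hasFDerivAt.comp_hasDerivAt p.2
    hu.hasFDerivAt.hasDerivAt_slice_snd).deriv

theorem pd2_pd1_eq_pd1_pd2 (hu : ContDiff ℝ 2 u) (p : ℝ × ℝ) :
    pd2 (pd1 u) p = pd1 (pd2 u) p := by
  have hu₁ : Differentiable ℝ u := hu.differentiable (by norm_num)
  have hu₂ : Differentiable ℝ (fderiv ℝ u) :=
    (hu.fderiv_right (m := 1) le_rfl).differentiable one_ne_zero
  rw [show pd1 u = fun q => fderiv ℝ u q (1, 0) from funext fun q => pd1_eq_fderiv (hu₁ q),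
    show pd2 u = fun q => fderiv ℝ u q (0, 1) from funext fun q => pd2_eq_fderiv (hu₁ q),
    pd2_fderiv_apply (hu₂ p), pd1_fderiv_apply (hu₂ p)]
  exact hu.contDiffAt.isSymmSndFDerivAt (by simp) _ _

end PartialDerivatives

section Backlund

variable {k : ℝ} {u w : ℝ × ℝ → ℝ}

theorem one_sub_sq_mul_pd2_sq_of_backlund (hk : k ≠ 0)
    (h1 : ∀ p, pd2 u p = k⁻¹ * sin (u p - w p)) (p : ℝ × ℝ) :
    1 - k ^ 2 * pd2 u p ^ 2 = cos (u p - w p) ^ 2 := by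
  rw [h1 p, mul_pow, ← mul_assoc, ← mul_pow, mul_inv_cancel₀ hk, one_pow, one_mul,
    ← sin_sq_add_cos_sq (u p - w p), add_sub_cancel_left]

theorem pd1_pd2_of_backlund (hk : k ≠ 0) (hu : Differentiable ℝ u) (hw : Differentiable ℝ w)
    (h1 : ∀ p, pd2 u p = k⁻¹ * sin (u p - w p))
    (h2 : ∀ p, pd1 u p = pd1 w p + k * sin (u p)) (p : ℝ × ℝ) :
    pd1 (pd2 u) p = cos (u p - w p) * sin (u p) := by
  have hderiv := (((hu p).hasDerivAt_pd1.sub (hw p).hasDerivAt_pd1).sin).const_mul k⁻¹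
  rw [funext h1]
  refine hderiv.deriv.trans ?_
  simp only [Pi.sub_apply, Prod.mk.eta, h2 p, add_sub_cancel_left]
  field_simp

end Backlund

/-- If `u`, `w` satisfy the Bäcklund relations
`u_{x₂} = k⁻¹ sin(u − w)`, `u_{x₁} = w_{x₁} + k sin u` with `k ≠ 0`, and
`cos(u − w) ≥ 0` everywhere, then `1 − k² u_{x₂}² = cos²(u − w) ≥ 0` and `u`
satisfies the nonlinear wave equation `u_{x₁x₂} = √(1 − k² u_{x₂}²) sin u`. -/
theorem backlund_implies_nonlinear_wave (k : ℝ) (hk : k ≠ 0)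
    (u w : ℝ × ℝ → ℝ) (hu : ContDiff ℝ 2 u) (hw : ContDiff ℝ 2 w)
    (h1 : ∀ p : ℝ × ℝ, pd2 u p = k⁻¹ * Real.sin (u p - w p))
    (h2 : ∀ p : ℝ × ℝ, pd1 u p = pd1 w p + k * Real.sin (u p))
    (hcos : ∀ p : ℝ × ℝ, 0 ≤ Real.cos (u p - w p)) :
    ∀ p : ℝ × ℝ,
      1 - k ^ 2 * (pd2 u p) ^ 2 = (Real.cos (u p - w p)) ^ 2 ∧
      0 ≤ 1 - k ^ 2 * (pd2 u p) ^ 2 ∧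
      pd2 (pd1 u) p = Real.sqrt (1 - k ^ 2 * (pd2 u p) ^ 2) * Real.sin (u p) := by
  intro p
  have hsq := one_sub_sq_mul_pd2_sq_of_backlund hk h1 p
  refine ⟨hsq, hsq ▸ sq_nonneg _, ?_⟩
  rw [pd2_pd1_eq_pd1_pd2 hu, pd1_pd2_of_backlund hk (hu.differentiable (by norm_num))
    (hw.differentiable (by norm_num)) h1 h2, hsq, sqrt_sq (hcos p)]
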